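/- With notation as in the WHN decomposition (h an FDH function, h_i its WHN graded pieces for i = 1, …, s+1, each decomposed into rank-one FDH functions h_i^1, …, h_i^{ρ_i}), one has the strict inequality h_i^{ρ_i} ≻ h_{i+1}^1 for i = 1, …, s, where ≻ is the order on torsion-free FDH functions comparing first degree and then (inversely) deficiency. -/

import Mathlib

open Finset

/-- First difference `r(n) = h(n) - h(n-1)`. -/
def dr (h : ℤ → ℤ) (n : ℤ) : ℤ := h n - h (n - 1)

/-- An FDH function: nonnegative, nondecreasing first differences nonnegative,
vanishing for `n ≪ 0`, eventually linear `ρ n + σ` with `ρ ≥ 0`. -/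
def IsFDH (h : ℤ → ℤ) : Prop :=
  (∀ n, 0 ≤ h n) ∧ (∀ n, 0 ≤ dr h n) ∧ (∃ N : ℤ, ∀ n ≤ N, h n = 0) ∧
  (∃ ρ σ : ℤ, 0 ≤ ρ ∧ ∃ N : ℤ, ∀ n ≥ N, h n = ρ * n + σ)

/-- Torsion-free: `r(m) ≥ 1` implies `r(n) ≥ 1` for all `n ≥ m`. -/
def TorsionFree (h : ℤ → ℤ) : Prop := ∀ m n : ℤ, m ≤ n → 1 ≤ dr h m → 1 ≤ dr h n

/-- `ht` is the function `h̃(n) = max_{m ≥ n} (h(m) + (n-m) r(m))`. -/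
def TildeSpec (h ht : ℤ → ℤ) : Prop :=
  ∀ n : ℤ, IsGreatest {v : ℤ | ∃ m : ℤ, n ≤ m ∧ v = h m + (n - m) * dr h m} (ht n)

/-- `t n` is the largest maximizer of `m ↦ h(m) + (n-m) r(m)` over `m ≥ n`,
equal to `⊤` when the set of maximizers is unbounded. -/
def TSpec (h ht : ℤ → ℤ) (t : ℤ → WithTop ℤ) : Prop :=
  ∀ n : ℤ,
    (∀ m : ℤ, n ≤ m → ht n = h m + (n - m) * dr h m → (m : WithTop ℤ) ≤ t n) ∧
    (∀ τ : ℤ, t n = (τ : WithTop ℤ) → n ≤ τ ∧ ht n = h τ + (n - τ) * dr h τ) ∧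
    (t n = ⊤ → ∀ M : ℤ, ∃ m : ℤ, M ≤ m ∧ n ≤ m ∧ ht n = h m + (n - m) * dr h m)

/-- The function gamma^i of the canonical rank-one decomposition. -/
def gam (ν β i n : ℤ) : ℤ := if i ≤ β then max (n - ν + 1) 0 else max (n - ν) 0

/-- The rank-one piece h^i = min(gamma^i, (h - sum_{k<i} gamma^k)_+). -/
noncomputable def rkOnePiece (h : ℤ → ℤ) (ν β i n : ℤ) : ℤ :=
  min (gam ν β i n) (max (h n - ∑ k ∈ Finset.Icc 1 (i - 1), gam ν β k n) 0)

/-- t takes exactly two distinct values. -/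
def TwoValues (t : ℤ → WithTop ℤ) : Prop :=
  ∃ v w : WithTop ℤ, v ≠ w ∧ (∃ n : ℤ, t n = v) ∧ (∃ n : ℤ, t n = w) ∧
    ∀ n : ℤ, t n = v ∨ t n = w

/-- g is a rank-one torsion-free FDH-type function of degree d with deficiency
delta = sum over all of ZZ of ((n + d + 1)_+ - g n), the sum being computed over any
finite interval [M, N] outside of which all terms vanish. -/
def HasDegDef (g : ℤ → ℤ) (d δ : ℤ) : Prop :=
  ∃ M N : ℤ, M ≤ N ∧ (∀ n : ℤ, n < M → g n = 0 ∧ n + d + 1 ≤ 0) ∧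
    (∀ n : ℤ, n > N → g n = n + d + 1) ∧
    δ = ∑ n ∈ Finset.Icc M N, (max (n + d + 1) 0 - g n)


/-! Beyond `τcur` the pieces `hcur` and `hnxt` are differences of tangent lines of `h`
(`L τcur - L τprev`, resp. `L m - L τcur` for some `m > τcur`), so their affine forms
`ρ (n - ν) + β` hold on all of `ℤ`. Since `t` is monotone there is a first point `a` with
`t a = τcur`, and `t (a - 1) = τprev`. Comparing the tangent lines at `a - 1` and `a`
pins `νc = a`, while at `a` the line `L m` lies strictly below `L τcur`, so `a < νn`.
Hence the degree `-νc - 1` of `hcur^ρc` is at least that of `hnxt^1`. In case of equality,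
the deficiency of `hcur^ρc` only collects terms at `n < τcur`, while `hnxt^1` vanishes up
to `τcur`, so its deficiency also collects the positive term at `τcur`. -/

def tangentLine (h : ℤ → ℤ) (a x : ℤ) : ℤ := h a + (x - a) * dr h a

section TangentLine

variable (h : ℤ → ℤ)

lemma tangentLine_self (a : ℤ) : tangentLine h a a = h a := by
  simp [tangentLine]

lemma tangentLine_succ_self (a : ℤ) : tangentLine h (a + 1) a = h a := by
  simp only [tangentLine, dr, add_sub_cancel_right]
  ring

lemma tangentLine_add_one (a x : ℤ) :
    tangentLine h a (x + 1) = tangentLine h a x + dr h a := by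
  simp only [tangentLine]
  ring

lemma tangentLine_succ_sub (a x : ℤ) :
    tangentLine h (a + 1) x - tangentLine h a x = (x - a) * (dr h (a + 1) - dr h a) := by
  simp only [tangentLine, dr, add_sub_cancel_right]
  ring

variable {h}

lemma tangentLine_eq_of_affine {ρ σ N m x : ℤ} (hlin : ∀ n ≥ N, h n = ρ * n + σ)
    (hm : N < m) (hx : N ≤ x) : tangentLine h m x = h x := by
  simp only [tangentLine, dr, hlin m hm.le, hlin (m - 1) (by omega), hlin x hx]
  ring

/-- Two affine functions agreeing at two consecutive points agree everywhere. -/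
lemma tangentLine_sub_eq_of_eventually {a b ρ ν β : ℤ}
    (hev : ∃ N, ∀ n ≥ N, tangentLine h b n - tangentLine h a n = ρ * (n - ν) + β) (x : ℤ) :
    tangentLine h b x - tangentLine h a x = ρ * (x - ν) + β := by
  obtain ⟨N, hN⟩ := hev
  have h₀ := hN N le_rfl
  have h₁ := hN (N + 1) (by omega)
  simp only [tangentLine] at h₀ h₁ ⊢
  linear_combination (x - N) * h₁ + (N + 1 - x) * h₀

end TangentLine

section Maximizer

variable {h ht : ℤ → ℤ} {t : ℤ → WithTop ℤ}

lemma TildeSpec.tangentLine_le (hT : TildeSpec h ht) {n m : ℤ} (hnm : n ≤ m) :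
    tangentLine h m n ≤ ht n :=
  (hT n).2 ⟨m, hnm, rfl⟩

lemma TSpec.eq_tangentLine (ht' : TSpec h ht t) {n τ : ℤ} (hτ : t n = τ) :
    ht n = tangentLine h τ n :=
  ((ht' n).2.1 τ hτ).2

lemma TSpec.lt_of_eq_coe (ht' : TSpec h ht t) {n τ : ℤ} (hτ : t n = τ) : n < τ := by
  obtain ⟨hle, hval⟩ := (ht' n).2.1 τ hτ
  refine lt_of_le_of_ne hle fun hnτ => ?_
  subst hnτ
  have hsucc : ht n = tangentLine h (n + 1) n := by
    rw [tangentLine_succ_self]; simpa [tangentLine] using hval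
  have := (ht' n).1 (n + 1) (by omega) hsucc
  rw [hτ, WithTop.coe_le_coe] at this
  omega

lemma TSpec.tangentLine_lt (hT : TildeSpec h ht) (ht' : TSpec h ht t) {n τ m : ℤ}
    (hτ : t n = τ) (hnm : n ≤ m) (hm : τ < m) : tangentLine h m n < ht n := by
  refine lt_of_le_of_ne (hT.tangentLine_le hnm) fun heq => ?_
  have := (ht' n).1 m hnm heq.symm
  rw [hτ, WithTop.coe_le_coe] at this
  omega

lemma TSpec.sub_tangentLine_le (hT : TildeSpec h ht) (ht' : TSpec h ht t) {n τ : ℤ}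
    (hτ : t n = τ) {j : ℤ} (hj : τ < j) :
    ht n - tangentLine h j n ≤ (j - n - 1) * (dr h j - dr h τ) := by
  have hnτ := ht'.lt_of_eq_coe hτ
  induction j, hj using Int.leInduction with
  | base =>
    have := tangentLine_succ_sub h τ n
    rw [ht'.eq_tangentLine hτ]
    nlinarith
  | succ j hj ih =>
    have hbeat := ht'.tangentLine_lt hT hτ (m := j) (by omega) (by omega)
    have hdr : 0 ≤ dr h j - dr h τ := by
      by_contra! hneg
      nlinarith
    have := tangentLine_succ_sub h j n
    nlinarith

lemma TSpec.dr_lt_dr (hT : TildeSpec h ht) (ht' : TSpec h ht t) {n τ j : ℤ}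
    (hτ : t n = τ) (hj : τ < j) : dr h τ < dr h j := by
  have hnτ := ht'.lt_of_eq_coe hτ
  have hgap := ht'.sub_tangentLine_le hT hτ hj
  have hbeat := ht'.tangentLine_lt hT hτ (m := j) (by omega) hj
  by_contra! hle
  nlinarith

lemma TSpec.monotone (hT : TildeSpec h ht) (ht' : TSpec h ht t) : Monotone t := by
  refine monotone_int_of_le_succ fun n => ?_
  cases hτ' : t (n + 1) with
  | top => exact le_top
  | coe τ' =>
    have hnτ' := ht'.lt_of_eq_coe hτ'
    -- a maximizer `m > τ'` at `n` would lose to `τ'` at `n + 1`, forcing `dr h m < dr h τ'`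
    have hmax : ∀ m, n ≤ m → ht n = tangentLine h m n → m ≤ τ' := by
      intro m hnm hm
      by_contra! hτ'm
      have h₁ := hT.tangentLine_le (n := n) (m := τ') (by omega)
      have h₂ := ht'.tangentLine_lt hT hτ' (m := m) (by omega) hτ'm
      have h₃ := ht'.dr_lt_dr hT hτ' hτ'm
      rw [ht'.eq_tangentLine hτ', tangentLine_add_one, tangentLine_add_one] at h₂
      omega
    cases hτ : t n with
    | top =>
      obtain ⟨m, hm, hnm, hmax'⟩ := (ht' n).2.2 hτ (τ' + 1)
      have := hmax m hnm hmax'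
      omega
    | coe τ =>
      exact WithTop.coe_le_coe.mpr (hmax τ ((ht' n).2.1 τ hτ).1 (ht'.eq_tangentLine hτ))

end Maximizer

lemma Monotone.exists_jump_of_gap {α : Type*} [LinearOrder α] {f : ℤ → α} (hf : Monotone f)
    {u v : α} (huv : u < v) (hu : ∃ n, f n = u) (hv : ∃ n, f n = v)
    (hgap : ¬ ∃ n, u < f n ∧ f n < v) : ∃ a, f a = v ∧ f (a - 1) = u := by
  obtain ⟨n₁, hn₁⟩ := hu
  have hbdd : ∀ z, f z = v → n₁ + 1 ≤ z := fun z hz => by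
    by_contra! hzn
    have := hf (show z ≤ n₁ by omega)
    rw [hz, hn₁] at this
    exact huv.not_ge this
  obtain ⟨a, ha, hleast⟩ := Int.exists_least_of_bdd ⟨n₁ + 1, hbdd⟩ hv
  refine ⟨a, ha, ?_⟩
  have hlo : u ≤ f (a - 1) := hn₁ ▸ hf (by have := hbdd a ha; omega)
  have hhi : f (a - 1) < v := by
    refine lt_of_le_of_ne (ha ▸ hf (by omega)) fun heq => ?_
    have := hleast _ heq
    omega
  by_contra hne
  exact hgap ⟨a - 1, lt_of_le_of_ne hlo (Ne.symm hne), hhi⟩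

section RankOne

lemma gam_nonneg (ν β i n : ℤ) : 0 ≤ gam ν β i n := by
  unfold gam; split_ifs <;> exact le_max_right _ _

lemma gam_of_le {ν β i n : ℤ} (hn : ν ≤ n) :
    gam ν β i n = n - ν + if i ≤ β then 1 else 0 := by
  unfold gam; split_ifs <;> omega

lemma gam_eq_max (ν β i n : ℤ) :
    gam ν β i n = max (n + (-ν + if i ≤ β then 1 else 0)) 0 := by
  unfold gam; split_ifs <;> congr 1 <;> ring

lemma sum_gam_Icc {ν β i n : ℤ} (hβ : 0 ≤ β) (hi : 0 ≤ i) (hn : ν ≤ n) :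
    ∑ k ∈ Icc 1 i, gam ν β k n = i * (n - ν) + min i β := by
  rw [sum_congr rfl fun k _ => gam_of_le hn, sum_add_distrib, sum_const, sum_ite,
    sum_const_zero, add_zero, sum_const, nsmul_eq_mul, nsmul_eq_mul, mul_one, Int.card_Icc]
  have hfilter : {k ∈ Icc 1 i | k ≤ β} = Icc 1 (min i β) := by
    ext k; simp only [mem_filter, mem_Icc, le_min_iff]; omega
  rw [hfilter, Int.card_Icc, add_sub_cancel_right, add_sub_cancel_right,
    Int.toNat_of_nonneg hi, Int.toNat_of_nonneg (le_min hi hβ)]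

lemma rkOnePiece_nonneg (f : ℤ → ℤ) (ν β i n : ℤ) : 0 ≤ rkOnePiece f ν β i n :=
  le_min (gam_nonneg ν β i n) (le_max_right _ _)

lemma rkOnePiece_le_gam (f : ℤ → ℤ) (ν β i n : ℤ) : rkOnePiece f ν β i n ≤ gam ν β i n :=
  min_le_left _ _

lemma rkOnePiece_of_eq_zero {f : ℤ → ℤ} {n : ℤ} (hf : f n = 0) (ν β i : ℤ) :
    rkOnePiece f ν β i n = 0 := by
  have hsum : 0 ≤ ∑ k ∈ Icc 1 (i - 1), gam ν β k n := sum_nonneg fun k _ => gam_nonneg ν β k n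
  unfold rkOnePiece
  rw [hf, max_eq_right (by omega)]
  exact min_eq_right (gam_nonneg ν β i n)

lemma rkOnePiece_eq_gam {f : ℤ → ℤ} {ρ ν β i n : ℤ} (hβ : 0 ≤ β) (hi : 1 ≤ i)
    (hiρ : i ≤ ρ) (hn : ν ≤ n) (hfn : f n = ρ * (n - ν) + β) :
    rkOnePiece f ν β i n = gam ν β i n := by
  unfold rkOnePiece
  rw [hfn, sum_gam_Icc hβ (by omega) hn, gam_of_le hn]
  have : i * (n - ν) ≤ ρ * (n - ν) := mul_le_mul_of_nonneg_right hiρ (by omega)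
  have : (i - 1) * (n - ν) = i * (n - ν) - (n - ν) := by ring
  split_ifs <;> omega

end RankOne

section DegreeDeficiency

variable {g : ℤ → ℤ} {d δ : ℤ}

lemma HasDegDef.add_one_eq (hg : HasDegDef g d δ) {c K : ℤ}
    (hK : ∀ n ≥ K, g n = max (n + c) 0) : d + 1 = c := by
  obtain ⟨M, N, -, -, hN, -⟩ := hg
  have h₁ := hN (max (N + 1) (max K (-c))) (by omega)
  have h₂ := hK (max (N + 1) (max K (-c))) (by omega)
  omega

lemma HasDegDef.deficiency_le (hg : HasDegDef g d δ) (hg₀ : ∀ n, 0 ≤ g n) {K : ℤ}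
    (hK : ∀ n ≥ K, g n = max (n + d + 1) 0) : δ ≤ ∑ n ∈ Ico (-d) K, (n + d + 1) := by
  obtain ⟨M, N, -, -, -, rfl⟩ := hg
  have houtside : ∑ n ∈ Icc M N \ Ico (-d) K, (max (n + d + 1) 0 - g n) ≤ 0 :=
    sum_nonpos fun n hn => by
      have := hg₀ n
      rw [mem_sdiff, mem_Ico, not_and_or, not_le, not_lt] at hn
      rcases hn.2 with hnd | hnK
      · omega
      · rw [hK n hnK, sub_self]
  calc ∑ n ∈ Icc M N, (max (n + d + 1) 0 - g n)
      ≤ ∑ n ∈ Icc M N ∩ Ico (-d) K, (max (n + d + 1) 0 - g n) := by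
        rw [← sum_inter_add_sum_sdiff (Icc M N) (Ico (-d) K)]
        exact add_le_of_nonpos_right houtside
    _ ≤ ∑ n ∈ Icc M N ∩ Ico (-d) K, (n + d + 1) := by
        refine sum_le_sum fun n hn => ?_
        have := hg₀ n
        simp only [mem_inter, mem_Ico] at hn
        omega
    _ ≤ ∑ n ∈ Ico (-d) K, (n + d + 1) :=
        sum_le_sum_of_subset_of_nonneg inter_subset_right fun n hn _ => by
          simp only [mem_Ico] at hn; omega

lemma HasDegDef.le_deficiency (hg : HasDegDef g d δ) (hle : ∀ n, g n ≤ max (n + d + 1) 0)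
    {K : ℤ} (hK : ∀ n ≤ K, g n = 0) : ∑ n ∈ Icc (-d) K, (n + d + 1) ≤ δ := by
  obtain ⟨M, N, -, hM, hN, rfl⟩ := hg
  have hsub : Icc (-d) K ⊆ Icc M N := fun n hn => by
    simp only [mem_Icc] at hn ⊢
    constructor
    · by_contra! hnM; have := (hM n hnM).2; omega
    · by_contra! hNn; have := hN n hNn; have := hK n hn.2; omega
  calc ∑ n ∈ Icc (-d) K, (n + d + 1)
      = ∑ n ∈ Icc (-d) K, (max (n + d + 1) 0 - g n) := sum_congr rfl fun n hn => by
        simp only [mem_Icc] at hn; rw [hK n hn.2]; omega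
    _ ≤ ∑ n ∈ Icc M N, (max (n + d + 1) 0 - g n) :=
        sum_le_sum_of_subset_of_nonneg hsub fun n _ _ => by have := hle n; omega

lemma HasDegDef.deficiency_lt {g' : ℤ → ℤ} {δ' K : ℤ} (hg : HasDegDef g d δ)
    (hg' : HasDegDef g' d δ') (hg₀ : ∀ n, 0 ≤ g n) (hgK : ∀ n ≥ K, g n = max (n + d + 1) 0)
    (hg'le : ∀ n, g' n ≤ max (n + d + 1) 0) (hg'K : ∀ n ≤ K, g' n = 0) (hK : -d ≤ K) :
    δ < δ' :=
  calc δ ≤ ∑ n ∈ Ico (-d) K, (n + d + 1) := hg.deficiency_le hg₀ hgK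
    _ < ∑ n ∈ Icc (-d) K, (n + d + 1) := by
        rw [← Ico_insert_right hK, sum_insert right_notMem_Ico]
        omega
    _ ≤ δ' := hg'.le_deficiency hg'le hg'K

end DegreeDeficiency

section Pieces

variable {h ht : ℤ → ℤ} {t : ℤ → WithTop ℤ}

lemma piece_eq_tangentLine_sub {f : ℤ → ℤ} {a b : ℤ}
    (hf : ∀ n, f n = if n ≤ a then 0 else if n ≤ b then h n - tangentLine h a n
      else tangentLine h b n - tangentLine h a n)
    (hab : a < b) {n : ℤ} (hn : b ≤ n) : f n = tangentLine h b n - tangentLine h a n := by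
  rw [hf, if_neg (by omega)]
  split_ifs with hnb
  · rw [show n = b by omega, tangentLine_self]
  · rfl

lemma exists_piece_eq_tangentLine_sub (hF : IsFDH h) {f : ℤ → ℤ} {b : ℤ} {c : WithTop ℤ}
    (hbc : (b : WithTop ℤ) < c)
    (hf : ∀ n, f n = if n ≤ b then 0 else if (n : WithTop ℤ) ≤ c then h n - tangentLine h b n
      else tangentLine h (c.untopD 0) n - tangentLine h b n) :
    ∃ m, b < m ∧ ∃ N, ∀ n ≥ N, f n = tangentLine h m n - tangentLine h b n := by
  cases c with
  | top =>
    obtain ⟨-, -, -, ρ, σ, -, N, hN⟩ := hF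
    refine ⟨max N b + 1, by omega, max N b + 1, fun n hn => ?_⟩
    rw [hf, if_neg (by omega), if_pos le_top,
      tangentLine_eq_of_affine (m := max N b + 1) (x := n) hN (by omega) (by omega)]
  | coe c =>
    have hbc : b < c := WithTop.coe_lt_coe.mp hbc
    refine ⟨c, hbc, c + 1, fun n hn => ?_⟩
    rw [hf, if_neg (by omega), if_neg (by rw [WithTop.coe_le_coe]; omega), WithTop.untopD_coe]

lemma TSpec.eq_of_tangentLine_sub_eq (hT : TildeSpec h ht) (ht' : TSpec h ht t)
    {a τ τ' ρ ν β : ℤ} (ha : t a = τ') (ha' : t (a - 1) = τ) (hττ' : τ < τ') (hβ : 0 ≤ β)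
    (hβρ : β < ρ) (hL : ∀ x, tangentLine h τ' x - tangentLine h τ x = ρ * (x - ν) + β) :
    ν = a := by
  have haτ' := ht'.lt_of_eq_coe ha
  have haτ := ht'.lt_of_eq_coe ha'
  have hneg : ρ * (a - 1 - ν) + β < 0 := by
    have := ht'.tangentLine_lt hT ha' (m := τ') (by omega) hττ'
    rw [ht'.eq_tangentLine ha'] at this
    linarith [hL (a - 1)]
  have hnonneg : 0 ≤ ρ * (a - ν) + β := by
    have := hT.tangentLine_le (n := a) (m := τ) (by omega)
    rw [ht'.eq_tangentLine ha] at this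
    linarith [hL a]
  rcases lt_trichotomy a ν with haν | rfl | hνa
  · nlinarith
  · rfl
  · nlinarith

lemma TSpec.lt_of_tangentLine_sub_eq (hT : TildeSpec h ht) (ht' : TSpec h ht t)
    {a τ m ρ ν β : ℤ} (ha : t a = τ) (hm : τ < m) (hβ : 0 ≤ β) (hβρ : β < ρ)
    (hL : ∀ x, tangentLine h m x - tangentLine h τ x = ρ * (x - ν) + β) : a < ν := by
  have haτ := ht'.lt_of_eq_coe ha
  have := ht'.tangentLine_lt hT ha (m := m) (by omega) hm
  rw [ht'.eq_tangentLine ha] at this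
  have hneg : ρ * (a - ν) + β < 0 := by linarith [hL a]
  by_contra! hνa
  nlinarith

end Pieces

theorem consecutive_pieces_ordered_general (h ht : ℤ → ℤ) (t : ℤ → WithTop ℤ)
    (hF : IsFDH h) (hT : TildeSpec h ht) (ht' : TSpec h ht t)
    (τprev τcur : ℤ) (τnext : WithTop ℤ)
    (hvp : ∃ n : ℤ, t n = (τprev : WithTop ℤ))
    (hvc : ∃ n : ℤ, t n = (τcur : WithTop ℤ))
    (h01 : τprev < τcur) (h12 : (τcur : WithTop ℤ) < τnext)
    (hc1 : ¬ ∃ n : ℤ, (τprev : WithTop ℤ) < t n ∧ t n < (τcur : WithTop ℤ))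
    (hcur hnxt : ℤ → ℤ)
    (hcur_def : ∀ n : ℤ, hcur n =
      if n ≤ τprev then 0
      else if n ≤ τcur then h n - (h τprev + (n - τprev) * dr h τprev)
      else (h τcur + (n - τcur) * dr h τcur) - (h τprev + (n - τprev) * dr h τprev))
    (hnxt_def : ∀ n : ℤ, hnxt n =
      if n ≤ τcur then 0
      else if (n : WithTop ℤ) ≤ τnext then h n - (h τcur + (n - τcur) * dr h τcur)
      else (h (τnext.untopD 0) + (n - τnext.untopD 0) * dr h (τnext.untopD 0)) -
        (h τcur + (n - τcur) * dr h τcur))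
    (ρc νc βc : ℤ) (hβc : 0 ≤ βc ∧ βc < ρc)
    (hlinc : ∃ N : ℤ, ∀ n ≥ N, hcur n = ρc * (n - νc) + βc)
    (ρn νn βn : ℤ) (hβn : 0 ≤ βn ∧ βn < ρn)
    (hlinn : ∃ N : ℤ, ∀ n ≥ N, hnxt n = ρn * (n - νn) + βn) :
    ∀ d δ d' δ' : ℤ,
      HasDegDef (rkOnePiece hcur νc βc ρc) d δ →
      HasDegDef (rkOnePiece hnxt νn βn 1) d' δ' →
      (d' < d ∨ (d = d' ∧ δ < δ')) := by
  intro d δ d' δ' hD hD'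
  obtain ⟨Nc, hNc⟩ := hlinc
  obtain ⟨Nn, hNn⟩ := hlinn
  obtain ⟨m, hm, Nm, hNm⟩ := exists_piece_eq_tangentLine_sub hF h12 hnxt_def
  have hcur_eq n (hn : τcur ≤ n) := piece_eq_tangentLine_sub hcur_def h01 hn
  have hLc := tangentLine_sub_eq_of_eventually
    ⟨max Nc τcur, fun n hn => by rw [← hcur_eq n (by omega), hNc n (by omega)]⟩
  have hLn := tangentLine_sub_eq_of_eventually
    ⟨max Nn Nm, fun n hn => by rw [← hNm n (by omega), hNn n (by omega)]⟩
  obtain ⟨a, ha, ha'⟩ := (ht'.monotone hT).exists_jump_of_gap (WithTop.coe_lt_coe.mpr h01)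
    hvp hvc hc1
  have hνc : νc = a := ht'.eq_of_tangentLine_sub_eq hT ha ha' h01 hβc.1 hβc.2 hLc
  have hνn : a < νn := ht'.lt_of_tangentLine_sub_eq hT ha hm hβn.1 hβn.2 hLn
  have haτ : a < τcur := ht'.lt_of_eq_coe ha
  have hg n (hn : τcur ≤ n) : rkOnePiece hcur νc βc ρc n = max (n + -νc) 0 := by
    rw [rkOnePiece_eq_gam hβc.1 (by omega) le_rfl (by omega) (hcur_eq n hn ▸ hLc n),
      gam_eq_max, if_neg (by omega), add_zero]
  have hg' n (hn : max Nn νn ≤ n) : rkOnePiece hnxt νn βn 1 n = gam νn βn 1 n :=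
    rkOnePiece_eq_gam hβn.1 le_rfl (by omega) (by omega) (hNn n (by omega))
  have hd := hD.add_one_eq hg
  have hd' := hD'.add_one_eq fun n hn => (hg' n hn).trans (gam_eq_max ..)
  rcases lt_or_ge d' d with hlt | hge
  · exact Or.inl hlt
  have hdd' : d = d' := by split_ifs at hd' <;> omega
  subst hdd'
  refine Or.inr ⟨rfl, hD.deficiency_lt hD' (fun n => rkOnePiece_nonneg _ _ _ _ n)
    (fun n hn => by rw [hg n hn, ← hd, add_assoc])
    (fun n => (rkOnePiece_le_gam ..).trans_eq (by rw [gam_eq_max, ← hd', add_assoc]))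
    (fun n hn => rkOnePiece_of_eq_zero (by rw [hnxt_def, if_pos hn]) ..) (by omega)⟩

/-- the last rank-one piece of the WHN graded piece h_i strictly
dominates the first rank-one piece of h_{i+1}:  h_i^{rho_i} > h_{i+1}^1 for the
order comparing degree then (inversely) deficiency.  Here tau_prev < tau_cur are
consecutive finite values of t and tau_next (possibly top) is the value following
tau_cur; hcur and hnxt are the corresponding WHN graded pieces of h. -/
theorem consecutive_pieces_ordered (h ht : ℤ → ℤ) (t : ℤ → WithTop ℤ)
    (hF : IsFDH h) (hT : TildeSpec h ht) (ht' : TSpec h ht t)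
    (τprev τcur : ℤ) (τnext : WithTop ℤ)
    (hvp : ∃ n : ℤ, t n = (τprev : WithTop ℤ))
    (hvc : ∃ n : ℤ, t n = (τcur : WithTop ℤ))
    (hvn : ∃ n : ℤ, t n = τnext)
    (h01 : τprev < τcur) (h12 : (τcur : WithTop ℤ) < τnext)
    (hc1 : ¬ ∃ n : ℤ, (τprev : WithTop ℤ) < t n ∧ t n < (τcur : WithTop ℤ))
    (hc2 : ¬ ∃ n : ℤ, (τcur : WithTop ℤ) < t n ∧ t n < τnext)
    (hcur hnxt : ℤ → ℤ)
    (hcur_def : ∀ n : ℤ, hcur n =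
      if n ≤ τprev then 0
      else if n ≤ τcur then h n - (h τprev + (n - τprev) * dr h τprev)
      else (h τcur + (n - τcur) * dr h τcur) - (h τprev + (n - τprev) * dr h τprev))
    (hnxt_def : ∀ n : ℤ, hnxt n =
      if n ≤ τcur then 0
      else if (n : WithTop ℤ) ≤ τnext then h n - (h τcur + (n - τcur) * dr h τcur)
      else (h (τnext.untopD 0) + (n - τnext.untopD 0) * dr h (τnext.untopD 0)) -
        (h τcur + (n - τcur) * dr h τcur))
    (ρc νc βc : ℤ) (hβc : 0 ≤ βc ∧ βc < ρc)
    (hlinc : ∃ N : ℤ, ∀ n ≥ N, hcur n = ρc * (n - νc) + βc)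
    (ρn νn βn : ℤ) (hβn : 0 ≤ βn ∧ βn < ρn)
    (hlinn : ∃ N : ℤ, ∀ n ≥ N, hnxt n = ρn * (n - νn) + βn) :
    ∀ d δ d' δ' : ℤ,
      HasDegDef (rkOnePiece hcur νc βc ρc) d δ →
      HasDegDef (rkOnePiece hnxt νn βn 1) d' δ' →
      (d' < d ∨ (d = d' ∧ δ < δ')) :=
  consecutive_pieces_ordered_general h ht t hF hT ht' τprev τcur τnext hvp hvc h01 h12 hc1 hcur hnxt
    hcur_def hnxt_def ρc νc βc hβc hlinc ρn νn βn hβn hlinn
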